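/- arXiv:1405.4988 — 7 statements merged into one kernel-verified Lean document; each statement's English description precedes it below -/
import Mathlib

section
/- Every infinite-dimensional Banach lattice contains a countably infinite family of nonzero pairwise disjoint positive vectors; that is, if E is an infinite-dimensional Banach lattice, then there exists a sequence (x_n)_{n∈ℕ} of vectors of E with x_n > 0 for all n and |x_n| ∧ |x_m| = 0 whenever n ≠ m. -/
/-!
Suppose `E` has no infinite sequence of pairwise disjoint positive vectors. Then no positive
vector can be split indefinitely into disjoint positive pieces, so every positive vector dominates
an atom, and some finite set of atoms meets every positive vector. For an atom `a`, the interval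
`[0, a]` is the segment `[0, 1] • a`; hence, if `c` is the largest `t` with `t • a ≤ x` (finite
because the norm is solid), then `x - c • a` is disjoint from `a`. Peeling off the atoms one at
a time writes every positive vector, hence every vector, as a combination of finitely many atoms.
-/

open Set Submodule

section Lattice

variable {E : Type*} [Lattice E] [Zero E]

def IsRieszAtom (a : E) : Prop :=
  0 < a ∧ ∀ u v : E, 0 ≤ u → u ≤ a → 0 ≤ v → v ≤ a → u ⊓ v = 0 → u = 0 ∨ v = 0

variable (E) in
def HasDisjointSeq : Prop :=
  ∃ x : ℕ → E, (∀ n, 0 < x n) ∧ Pairwise fun m n ↦ x m ⊓ x n = 0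

theorem inf_eq_zero_of_le_of_le {a b c d : E} (ha : 0 ≤ a) (hb : 0 ≤ b) (hac : a ≤ c) (hbd : b ≤ d)
    (hcd : c ⊓ d = 0) : a ⊓ b = 0 :=
  le_antisymm (hcd ▸ inf_le_inf hac hbd) (le_inf ha hb)

theorem hasDisjointSeq_of_lt {x : ℕ → E} (hpos : ∀ n, 0 < x n)
    (hdisj : ∀ m n, m < n → x m ⊓ x n = 0) : HasDisjointSeq E := by
  refine ⟨x, hpos, fun m n hmn ↦ ?_⟩
  rcases hmn.lt_or_gt with hlt | hlt
  · exact hdisj m n hlt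
  · rw [inf_comm]; exact hdisj n m hlt

theorem hasDisjointSeq_of_forall_exists_disjoint {e : E} (he : 0 < e)
    (h : ∀ a, 0 < a → a ≤ e → ∃ b c, 0 < b ∧ b ≤ a ∧ 0 < c ∧ c ≤ a ∧ b ⊓ c = 0) :
    HasDisjointSeq E := by
  let I := {a : E // 0 < a ∧ a ≤ e}
  have hsplit : ∀ a : I, ∃ b c : I, b.1 ≤ a.1 ∧ c.1 ≤ a.1 ∧ b.1 ⊓ c.1 = 0 := by
    rintro ⟨a, ha, hae⟩
    obtain ⟨b, c, hb, hba, hc, hca, hbc⟩ := h a ha hae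
    exact ⟨⟨b, hb, hba.trans hae⟩, ⟨c, hc, hca.trans hae⟩, hba, hca, hbc⟩
  choose left right hleft hright hdisj using hsplit
  -- keep splitting the right-hand piece, collecting the left-hand pieces
  let rest : ℕ → I := fun n ↦ right^[n] ⟨e, he, le_rfl⟩
  have hrest_succ (n : ℕ) : rest (n + 1) = right (rest n) := Function.iterate_succ_apply' ..
  have hrest : Antitone fun n ↦ (rest n).1 :=
    antitone_nat_of_succ_le fun n ↦ hrest_succ n ▸ hright (rest n)
  refine hasDisjointSeq_of_lt (x := fun n ↦ (left (rest n)).1) (fun n ↦ (left (rest n)).2.1)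
    fun m n hmn ↦ inf_eq_zero_of_le_of_le (left _).2.1.le (left _).2.1.le le_rfl ?_ (hdisj (rest m))
  calc (left (rest n)).1 ≤ (rest n).1 := hleft _
    _ ≤ (rest (m + 1)).1 := hrest hmn
    _ = (right (rest m)).1 := by rw [hrest_succ]

theorem exists_isRieszAtom_le (h : ¬ HasDisjointSeq E) {e : E} (he : 0 < e) :
    ∃ a, IsRieszAtom a ∧ a ≤ e := by
  by_contra! hno
  refine h (hasDisjointSeq_of_forall_exists_disjoint he fun a ha hae ↦ ?_)
  have hA : ¬ IsRieszAtom a := fun hA ↦ hno a hA hae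
  simp only [IsRieszAtom, ha, true_and, not_forall, not_or] at hA
  obtain ⟨u, v, hu, hua, hv, hva, huv, hu0, hv0⟩ := hA
  exact ⟨u, v, hu.lt_of_ne' hu0, hua, hv.lt_of_ne' hv0, hva, huv⟩

theorem exists_finset_isRieszAtom_forall_inf_ne_zero (h : ¬ HasDisjointSeq E) :
    ∃ s : Finset E, (∀ a ∈ s, IsRieszAtom a) ∧ ∀ z, 0 < z → ∃ a ∈ s, z ⊓ a ≠ 0 := by
  obtain ⟨s, hs, hmeet⟩ : ∃ s : Finset E, (∀ a ∈ s, IsRieszAtom a) ∧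
      ∀ b, IsRieszAtom b → ∃ a ∈ s, a ⊓ b ≠ 0 := by
    by_contra! hno
    obtain ⟨x, hx, hdisj⟩ :=
      exists_seq_of_forall_finset_exists IsRieszAtom (fun a b ↦ a ⊓ b = 0) hno
    exact h (hasDisjointSeq_of_lt (fun n ↦ (hx n).1) hdisj)
  refine ⟨s, hs, fun z hz ↦ ?_⟩
  obtain ⟨b, hb, hbz⟩ := exists_isRieszAtom_le h hz
  obtain ⟨a, ha, hab⟩ := hmeet b hb
  refine ⟨a, ha, fun hza ↦ hab ?_⟩
  exact inf_eq_zero_of_le_of_le (hs a ha).1.le hb.1.le le_rfl hbz (inf_comm z a ▸ hza)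

end Lattice

section OrderedGroup

variable {E : Type*} [AddCommGroup E] [Lattice E] [IsOrderedAddMonoid E]

theorem IsRieszAtom.le_total {a u v : E} (ha : IsRieszAtom a) (hu : 0 ≤ u) (hua : u ≤ a)
    (hv : 0 ≤ v) (hva : v ≤ a) : u ≤ v ∨ v ≤ u := by
  have hpos : (u - v)⁺ ≤ a := (sup_le (sub_le_self u hv) hu).trans hua
  have hneg : (u - v)⁻ ≤ a := by
    rw [negPart_def, neg_sub]
    exact (sup_le (sub_le_self v hu) hv).trans hva
  rcases ha.2 _ _ (posPart_nonneg _) hpos (negPart_nonneg _) hneg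
    (posPart_inf_negPart_eq_zero _) with h | h
  · exact .inl (sub_nonpos.1 (posPart_eq_zero.1 h))
  · exact .inr (sub_nonneg.1 (negPart_eq_zero.1 h))

-- `[0, 1]` is covered by the closed sets `{t | t • a ≤ y}` and `{t | y ≤ t • a}`,
-- which must meet since `[0, 1]` is connected.
theorem IsRieszAtom.exists_eq_smul [Module ℝ E] [PosSMulMono ℝ E] [TopologicalSpace E]
    [OrderClosedTopology E] [ContinuousSMul ℝ E] {a y : E} (ha : IsRieszAtom a) (hy : 0 ≤ y)
    (hya : y ≤ a) : ∃ t ∈ Icc (0 : ℝ) 1, y = t • a := by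
  have hcont : Continuous fun t : ℝ ↦ t • a := continuous_id.smul continuous_const
  obtain ⟨t, ht, hle, hge⟩ := isPreconnected_closed_iff.1 isPreconnected_Icc
    {t | t • a ≤ y} {t | y ≤ t • a} (isClosed_le hcont continuous_const)
    (isClosed_le continuous_const hcont)
    (fun t ht ↦ ha.le_total (smul_nonneg ht.1 ha.1.le) (smul_le_of_le_one_left ha.1.le ht.2)
      hy hya)
    ⟨0, left_mem_Icc.2 zero_le_one, by simpa using hy⟩
    ⟨1, right_mem_Icc.2 zero_le_one, by simpa using hya⟩
  exact ⟨t, ht, le_antisymm hge hle⟩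

end OrderedGroup

section NormedLattice

variable {E : Type*} [NormedAddCommGroup E] [Lattice E] [IsOrderedAddMonoid E] [HasSolidNorm E]
  [NormedSpace ℝ E] [PosSMulMono ℝ E]

theorem IsRieszAtom.exists_smul_le_sub_inf_eq_zero {a x : E} (ha : IsRieszAtom a) (hx : 0 ≤ x) :
    ∃ c : ℝ, 0 ≤ c ∧ c • a ≤ x ∧ (x - c • a) ⊓ a = 0 := by
  let S := {t : ℝ | 0 ≤ t ∧ t • a ≤ x}
  have hbdd : BddAbove S := by
    refine ⟨‖x‖ / ‖a‖, fun t ⟨ht, hta⟩ ↦ ?_⟩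
    rw [le_div_iff₀ (norm_pos_iff.2 ha.1.ne')]
    calc t * ‖a‖ = ‖t • a‖ := by rw [norm_smul, Real.norm_of_nonneg ht]
      _ ≤ ‖x‖ := by
        apply norm_le_norm_of_abs_le_abs
        rwa [abs_of_nonneg (smul_nonneg ht ha.1.le), abs_of_nonneg hx]
  have hclosed : IsClosed S :=
    isClosed_Ici.inter (isClosed_le (continuous_id.smul continuous_const) continuous_const)
  obtain ⟨hc, hca⟩ : sSup S ∈ S := hclosed.csSup_mem ⟨0, le_rfl, by simpa using hx⟩ hbdd
  refine ⟨sSup S, hc, hca, ?_⟩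
  obtain ⟨s, hs, hz⟩ := ha.exists_eq_smul (le_inf (sub_nonneg.2 hca) ha.1.le) inf_le_right
  have hmem : sSup S + s ∈ S := by
    refine ⟨add_nonneg hc hs.1, ?_⟩
    rw [add_smul, ← le_sub_iff_add_le', ← hz]
    exact inf_le_left
  have hs0 : s = 0 := le_antisymm (by linarith [le_csSup hbdd hmem]) hs.1
  rw [hz, hs0, zero_smul]

theorem mem_span_of_forall_inf_ne_zero (s : Finset E) (hs : ∀ a ∈ s, IsRieszAtom a) {x : E}
    (hx : 0 ≤ x) (hmeet : ∀ z, 0 < z → z ≤ x → ∃ a ∈ s, z ⊓ a ≠ 0) :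
    x ∈ span ℝ (s : Set E) := by
  classical
  induction s using Finset.induction_on generalizing x with
  | empty =>
    obtain rfl | hx := hx.eq_or_lt
    · exact zero_mem _
    · obtain ⟨a, ha, -⟩ := hmeet x hx le_rfl
      simp at ha
  | insert a s has ih =>
    have ha := hs a (Finset.mem_insert_self a s)
    obtain ⟨c, hc, hca, hdisj⟩ := ha.exists_smul_le_sub_inf_eq_zero hx
    have hrest : x - c • a ∈ span ℝ (s : Set E) := by
      refine ih (fun b hb ↦ hs b (Finset.mem_insert_of_mem hb)) (sub_nonneg.2 hca)
        fun z hz hzx ↦ ?_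
      obtain ⟨b, hb, hzb⟩ := hmeet z hz (hzx.trans (sub_le_self x (smul_nonneg hc ha.1.le)))
      rcases Finset.mem_insert.1 hb with rfl | hb
      · exact absurd (inf_eq_zero_of_le_of_le hz.le ha.1.le hzx le_rfl hdisj) hzb
      · exact ⟨b, hb, hzb⟩
    rw [← sub_add_cancel x (c • a), Finset.coe_insert]
    exact add_mem (span_mono (subset_insert a _) hrest) (smul_mem _ c (subset_span (mem_insert a _)))

theorem finiteDimensional_of_not_hasDisjointSeq (h : ¬ HasDisjointSeq E) :
    FiniteDimensional ℝ E := by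
  obtain ⟨s, hs, hmeet⟩ := exists_finset_isRieszAtom_forall_inf_ne_zero h
  have hspan : span ℝ (s : Set E) = ⊤ := by
    refine eq_top_iff.2 fun x _ ↦ ?_
    rw [← posPart_sub_negPart x]
    exact sub_mem (mem_span_of_forall_inf_ne_zero s hs (posPart_nonneg x) fun z hz _ ↦ hmeet z hz)
      (mem_span_of_forall_inf_ne_zero s hs (negPart_nonneg x) fun z hz _ ↦ hmeet z hz)
  exact ⟨⟨s, hspan⟩⟩

end NormedLattice

theorem infinite_dim_banach_lattice_exists_disjoint_sequence_general
    {E : Type*} [NormedAddCommGroup E] [Lattice E] [IsOrderedAddMonoid E] [HasSolidNorm E]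
    [NormedSpace ℝ E] [PosSMulStrictMono ℝ E]
    (h : ¬ FiniteDimensional ℝ E) :
    ∃ x : ℕ → E, (∀ n, 0 < x n) ∧ ∀ n m, n ≠ m → |x n| ⊓ |x m| = 0 := by
  obtain ⟨x, hpos, hdisj⟩ : HasDisjointSeq E :=
    not_imp_comm.1 finiteDimensional_of_not_hasDisjointSeq h
  refine ⟨x, hpos, fun n m hnm ↦ ?_⟩
  rw [abs_of_pos (hpos n), abs_of_pos (hpos m)]
  exact hdisj hnm

/-- Every infinite-dimensional Banach lattice contains a countably infinite family of
nonzero pairwise disjoint positive vectors. -/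
theorem infinite_dim_banach_lattice_exists_disjoint_sequence
    {E : Type*} [NormedAddCommGroup E] [Lattice E] [IsOrderedAddMonoid E] [HasSolidNorm E]
    [NormedSpace ℝ E] [PosSMulStrictMono ℝ E] [PosSMulReflectLT ℝ E]
    [CompleteSpace E] (h : ¬ FiniteDimensional ℝ E) :
    ∃ x : ℕ → E, (∀ n, 0 < x n) ∧ ∀ n m, n ≠ m → |x n| ⊓ |x m| = 0 :=
  infinite_dim_banach_lattice_exists_disjoint_sequence_general h
end

section
/- Let E be a Banach lattice of dimension at least n and let x_1, …, x_n be nonzero positive pairwise disjoint vectors of E. Then there exist positive continuous linear functionals φ_1, …, φ_n on E such that φ_i(x_j) = δ_{ij} for all i, j = 1, …, n. -/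
/-!
For `0 < a`, every vector `w ≥ -b` with `b ≥ 0` disjoint from `a` satisfies
`a = (a - b)⁺ ≤ |a + w|`, so the cone `E₊ + {a}ᵈ` stays at distance `‖a‖` from `-a`.
Separating `-a` from the closure of this cone by Hahn–Banach gives a functional that is
nonnegative on `E₊`, vanishes on `{a}ᵈ` and is positive at `a`. Normalizing it at each `x i`
and using the pairwise disjointness of the `x j` gives the biorthogonal system.
-/

section LatticeOrderedGroup

variable {E : Type*} [Lattice E] [AddCommGroup E] [IsOrderedAddMonoid E] {a b c : E}

lemma inf_add_eq_zero_of_inf_eq_zero (ha : 0 ≤ a) (hb : 0 ≤ b) (hc : 0 ≤ c)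
    (hab : a ⊓ b = 0) (hac : a ⊓ c = 0) : a ⊓ (b + c) = 0 := by
  have h : a ⊓ (b + c) - b ≤ a ⊓ c :=
    le_inf ((sub_le_self _ hb).trans inf_le_left) (sub_le_iff_le_add'.2 inf_le_right)
  rw [hac, sub_nonpos] at h
  exact le_antisymm (hab ▸ le_inf inf_le_left h) (le_inf ha (add_nonneg hb hc))

lemma posPart_sub_eq_self_of_inf_eq_zero (hab : a ⊓ b = 0) : (a - b)⁺ = a := by
  rw [eq_comm, ← sub_eq_zero, ← inf_eq_sub_posPart_sub, hab]

end LatticeOrderedGroup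

lemma norm_le_norm_add_of_inf_eq_zero {E : Type*} [NormedAddCommGroup E] [Lattice E]
    [HasSolidNorm E] [IsOrderedAddMonoid E] {a b w : E} (ha : 0 ≤ a) (hab : a ⊓ b = 0)
    (hw : -b ≤ w) : ‖a‖ ≤ ‖a + w‖ := by
  refine norm_le_norm_of_abs_le_abs ?_
  calc |a| = (a - b)⁺ := by rw [abs_of_nonneg ha, posPart_sub_eq_self_of_inf_eq_zero hab]
    _ ≤ (a + w)⁺ := posPart_mono (by rw [sub_eq_add_neg]; exact add_le_add_right hw a)
    _ ≤ |a + w| := sup_le (le_abs_self _) (abs_nonneg _)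

section LatticeOrderedModule

variable {𝕜 E : Type*} [Field 𝕜] [LinearOrder 𝕜] [IsStrictOrderedRing 𝕜]
  [Lattice E] [AddCommGroup E] [IsOrderedAddMonoid E] [Module 𝕜 E] [PosSMulStrictMono 𝕜 E]

lemma inf_smul_eq_zero_of_inf_eq_zero {a b : E} (ha : 0 ≤ a) (hb : 0 ≤ b) (hab : a ⊓ b = 0)
    {t : 𝕜} (ht : 0 ≤ t) : a ⊓ t • b = 0 := by
  set M := max 1 t
  have hM : 0 < M := zero_lt_one.trans_le (le_max_left 1 t)
  refine le_antisymm ?_ (le_inf ha (smul_nonneg ht hb))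
  calc a ⊓ t • b ≤ M • a ⊓ M • b :=
        inf_le_inf (le_smul_of_one_le_left ha (le_max_left 1 t))
          (smul_le_smul_of_nonneg_right (le_max_right 1 t) hb)
    _ = M • (a ⊓ b) := ((OrderIso.smulRight hM).map_inf a b).symm
    _ = 0 := by rw [hab, smul_zero]

variable (𝕜) in
/-- The cone `E₊ + {a}ᵈ`, the positive cone plus the disjoint complement of `a`, written as the
vectors bounded below by `-b` for some `b ≥ 0` disjoint from `|a|`. -/
def positiveAddDisjointCone (a : E) : PointedCone 𝕜 E where
  carrier := {w | ∃ b, 0 ≤ b ∧ |a| ⊓ b = 0 ∧ -b ≤ w}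
  zero_mem' := ⟨0, le_rfl, inf_eq_right.2 (abs_nonneg a), neg_zero.le⟩
  add_mem' := by
    rintro v w ⟨b, hb, hab, hv⟩ ⟨b', hb', hab', hw⟩
    refine ⟨b + b', add_nonneg hb hb',
      inf_add_eq_zero_of_inf_eq_zero (abs_nonneg a) hb hb' hab hab', ?_⟩
    rw [neg_add]
    exact add_le_add hv hw
  smul_mem' := by
    rintro ⟨t, ht⟩ w ⟨b, hb, hab, hw⟩
    refine ⟨t • b, smul_nonneg ht hb,
      inf_smul_eq_zero_of_inf_eq_zero (abs_nonneg a) hb hab ht, ?_⟩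
    rw [← smul_neg]
    exact smul_le_smul_of_nonneg_left hw ht

end LatticeOrderedModule

section NormedLattice

variable {E : Type*} [NormedAddCommGroup E] [Lattice E] [HasSolidNorm E] [IsOrderedAddMonoid E]
  [NormedSpace ℝ E] [PosSMulStrictMono ℝ E] {a : E}

lemma neg_notMem_closure_positiveAddDisjointCone (ha : 0 < a) :
    -a ∉ closure (positiveAddDisjointCone ℝ a : Set E) := by
  rw [Metric.mem_closure_iff]
  push Not
  refine ⟨‖a‖, norm_pos_iff.2 ha.ne', fun w ⟨b, _, hab, hw⟩ => ?_⟩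
  rw [abs_of_pos ha] at hab
  rw [dist_comm, dist_eq_norm, sub_neg_eq_add, add_comm]
  exact norm_le_norm_add_of_inf_eq_zero ha.le hab hw

lemma exists_positive_functional_eq_one_vanishing_on_disjoint (ha : 0 < a) :
    ∃ φ : E →L[ℝ] ℝ, (∀ v, 0 ≤ v → 0 ≤ φ v) ∧ φ a = 1 ∧
      ∀ c, |a| ⊓ |c| = 0 → φ c = 0 := by
  obtain ⟨f, hf_closure, hf_neg⟩ :=
    ProperCone.hyperplane_separation_point (Submodule.closure (positiveAddDisjointCone ℝ a))
      (neg_notMem_closure_positiveAddDisjointCone ha)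
  have hf : ∀ w ∈ positiveAddDisjointCone ℝ a, 0 ≤ f w :=
    fun w hw => hf_closure w (subset_closure hw)
  have hfa : 0 < f a := by simpa using hf_neg
  refine ⟨(f a)⁻¹ • f, fun v hv => ?_, inv_mul_cancel₀ hfa.ne', fun c hc => ?_⟩
  · exact mul_nonneg (inv_nonneg.2 hfa.le)
      (hf v ⟨0, le_rfl, inf_eq_right.2 (abs_nonneg a), by simpa using hv⟩)
  · have hc_mem : c ∈ positiveAddDisjointCone ℝ a :=
      ⟨|c|, abs_nonneg c, hc, neg_le.1 (neg_le_abs c)⟩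
    have hc_neg_mem : -c ∈ positiveAddDisjointCone ℝ a :=
      ⟨|c|, abs_nonneg c, hc, neg_le_neg (le_abs_self c)⟩
    have : f c = 0 := le_antisymm (by simpa using hf _ hc_neg_mem) (hf c hc_mem)
    simp [this]

end NormedLattice

theorem exists_biorthogonal_positive_functionals_general
    {E : Type*} [NormedAddCommGroup E] [Lattice E] [HasSolidNorm E] [IsOrderedAddMonoid E]
    [NormedSpace ℝ E] [PosSMulStrictMono ℝ E]
    (n : ℕ) (x : Fin n → E) (hx : ∀ i, 0 < x i)
    (hdisj : ∀ i j, i ≠ j → |x i| ⊓ |x j| = 0) :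
    ∃ φ : Fin n → (E →L[ℝ] ℝ),
      (∀ i, ∀ v : E, 0 ≤ v → 0 ≤ φ i v) ∧
      (∀ i j, φ i (x j) = if i = j then 1 else 0) := by
  choose φ hφ_pos hφ_one hφ_disj using
    fun i => exists_positive_functional_eq_one_vanishing_on_disjoint (hx i)
  refine ⟨φ, hφ_pos, fun i j => ?_⟩
  split_ifs with hij
  · exact hij ▸ hφ_one i
  · exact hφ_disj i (x j) (hdisj i j hij)

/-- If `E` is a Banach lattice of dimension at least `n` and `x 1, …, x n` are nonzero
positive pairwise disjoint vectors, then there are positive continuous linear functionals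
`φ 1, …, φ n` with `φ i (x j) = δ_{ij}`. -/
theorem exists_biorthogonal_positive_functionals
    {E : Type*} [NormedAddCommGroup E] [Lattice E] [HasSolidNorm E] [IsOrderedAddMonoid E]
    [NormedSpace ℝ E] [PosSMulStrictMono ℝ E]
    [CompleteSpace E] (n : ℕ) (hdim : (n : Cardinal) ≤ Module.rank ℝ E)
    (x : Fin n → E) (hx : ∀ i, 0 < x i)
    (hdisj : ∀ i j, i ≠ j → |x i| ⊓ |x j| = 0) :
    ∃ φ : Fin n → (E →L[ℝ] ℝ),
      (∀ i, ∀ v : E, 0 ≤ v → 0 ≤ φ i v) ∧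
      (∀ i j, φ i (x j) = if i = j then 1 else 0) :=
  exists_biorthogonal_positive_functionals_general n x hx hdisj
end

section
/- Let E be a Banach lattice of dimension at least 3, let x_1, x_2, x_3 be nonzero positive pairwise disjoint vectors of E, and let φ_1, φ_2, φ_3 be positive continuous linear functionals on E with φ_i(x_j) = δ_{ij}. Define the bounded finite-rank operators A = (−x_2 + x_3) ⊗ φ_1 + (x_1 + x_2) ⊗ φ_2 and B = x_2 ⊗ (φ_2 + φ_3). Then AB = (x_1 + x_2) ⊗ (φ_2 + φ_3), BA = x_2 ⊗ φ_2, AB ≥ BA ≥ 0, B is positive, and the operator A(AB − BA) has eigenvalue 1 with eigenvector x_1 + x_3 (in particular AB − BA is not quasinilpotent after multiplication by A, so AB − BA is not in the radical of the Banach algebra generated by A and B). -/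
/-!
Everything follows from the composition rule `(x ⊗ φ)(y ⊗ ψ) = φ(y) · (x ⊗ ψ)` and the
biorthogonality `φᵢ(xⱼ) = δᵢⱼ`. The commutator `AB - BA = x₁ ⊗ φ₂ + (x₁ + x₂) ⊗ φ₃` is a sum of
positive rank-one operators, and it sends `x₁ + x₃` to `x₁ + x₂`, which `A` sends back to `x₁ + x₃`.
-/

namespace ContinuousLinearMap

variable {R M : Type*} [Semiring R] [TopologicalSpace R] [AddCommMonoid M] [TopologicalSpace M]
  [Module R M] [ContinuousSMul R M]

theorem smulRight_mul_smulRight (f g : M →L[R] R) (x y : M) :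
    f.smulRight x * g.smulRight y = g.smulRight (f y • x) :=
  smulRight_comp_smulRight f g

variable [PartialOrder R] [PartialOrder M] [PosSMulMono R M]

theorem smulRight_apply_nonneg {f : M →L[R] R} (hf : ∀ v, 0 ≤ v → 0 ≤ f v) {x : M} (hx : 0 ≤ x)
    {v : M} (hv : 0 ≤ v) : 0 ≤ f.smulRight x v :=
  smul_nonneg (hf v hv) hx

end ContinuousLinearMap

open ContinuousLinearMap

theorem counterexample_one_general
    {E : Type*} [NormedAddCommGroup E] [Lattice E]
    [IsOrderedAddMonoid E] [NormedSpace ℝ E] [PosSMulStrictMono ℝ E]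
    (x₁ x₂ x₃ : E) (hx₁ : 0 < x₁) (hx₂ : 0 < x₂) (hx₃ : 0 < x₃)
    (φ₁ φ₂ φ₃ : E →L[ℝ] ℝ)
    (hφ₂ : ∀ v : E, 0 ≤ v → 0 ≤ φ₂ v)
    (hφ₃ : ∀ v : E, 0 ≤ v → 0 ≤ φ₃ v)
    (h11 : φ₁ x₁ = 1) (h12 : φ₁ x₂ = 0)
    (h21 : φ₂ x₁ = 0) (h22 : φ₂ x₂ = 1) (h23 : φ₂ x₃ = 0)
    (h31 : φ₃ x₁ = 0) (h32 : φ₃ x₂ = 0) (h33 : φ₃ x₃ = 1)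
    (A B : E →L[ℝ] E)
    (hA : A = φ₁.smulRight (-x₂ + x₃) + φ₂.smulRight (x₁ + x₂))
    (hB : B = (φ₂ + φ₃).smulRight x₂) :
    A * B = (φ₂ + φ₃).smulRight (x₁ + x₂) ∧
    B * A = φ₂.smulRight x₂ ∧
    (∀ v : E, 0 ≤ v → (B * A) v ≤ (A * B) v) ∧
    (∀ v : E, 0 ≤ v → 0 ≤ (B * A) v) ∧
    (∀ v : E, 0 ≤ v → 0 ≤ B v) ∧
    (A * (A * B - B * A)) (x₁ + x₃) = x₁ + x₃ ∧
    x₁ + x₃ ≠ 0 := by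
  have hAB : A * B = (φ₂ + φ₃).smulRight (x₁ + x₂) := by
    simp [hA, hB, add_mul, smulRight_mul_smulRight, h12, h22]
  have hBA : B * A = φ₂.smulRight x₂ := by
    simp [hA, hB, mul_add, smulRight_mul_smulRight, h21, h22, h23, h31, h32, h33]
  have hcomm : A * B - B * A = φ₂.smulRight x₁ + φ₃.smulRight (x₁ + x₂) := by
    ext v
    simp only [hAB, hBA, sub_apply, add_apply, smulRight_apply]
    module
  refine ⟨hAB, hBA, fun v hv => ?_, fun v hv => ?_, fun v hv => ?_, ?_, (add_pos hx₁ hx₃).ne'⟩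
  · rw [← sub_nonneg, ← sub_apply, hcomm, add_apply]
    exact add_nonneg (smulRight_apply_nonneg hφ₂ hx₁.le hv)
      (smulRight_apply_nonneg hφ₃ (add_pos hx₁ hx₂).le hv)
  · exact hBA ▸ smulRight_apply_nonneg hφ₂ hx₂.le hv
  · exact hB ▸ smulRight_apply_nonneg (fun w hw => add_nonneg (hφ₂ w hw) (hφ₃ w hw)) hx₂.le hv
  · rw [mul_apply_eq_comp, hcomm, hA]
    simp only [add_apply, smulRight_apply, map_add, h11, h12, h21, h22, h23, h31, h33, zero_smul,
      one_smul, add_zero, zero_add]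
    abel

/-- Counterexample: for `A = (−x₂+x₃) ⊗ φ₁ + (x₁+x₂) ⊗ φ₂` and `B = x₂ ⊗ (φ₂+φ₃)` one has
`AB = (x₁+x₂) ⊗ (φ₂+φ₃)`, `BA = x₂ ⊗ φ₂`, `AB ≥ BA ≥ 0`, `B ≥ 0`, and `A(AB−BA)` has
eigenvalue `1` with eigenvector `x₁ + x₃`.  (Here `x ⊗ φ` is `φ.smulRight x`.) -/
theorem counterexample_one
    {E : Type*} [NormedAddCommGroup E] [Lattice E] [HasSolidNorm E]
    [IsOrderedAddMonoid E] [NormedSpace ℝ E] [PosSMulStrictMono ℝ E]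
    [CompleteSpace E] (hdim : (3 : Cardinal) ≤ Module.rank ℝ E)
    (x₁ x₂ x₃ : E) (hx₁ : 0 < x₁) (hx₂ : 0 < x₂) (hx₃ : 0 < x₃)
    (hd12 : |x₁| ⊓ |x₂| = 0) (hd13 : |x₁| ⊓ |x₃| = 0) (hd23 : |x₂| ⊓ |x₃| = 0)
    (φ₁ φ₂ φ₃ : E →L[ℝ] ℝ)
    (hφ₁ : ∀ v : E, 0 ≤ v → 0 ≤ φ₁ v) (hφ₂ : ∀ v : E, 0 ≤ v → 0 ≤ φ₂ v)
    (hφ₃ : ∀ v : E, 0 ≤ v → 0 ≤ φ₃ v)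
    (h11 : φ₁ x₁ = 1) (h12 : φ₁ x₂ = 0) (h13 : φ₁ x₃ = 0)
    (h21 : φ₂ x₁ = 0) (h22 : φ₂ x₂ = 1) (h23 : φ₂ x₃ = 0)
    (h31 : φ₃ x₁ = 0) (h32 : φ₃ x₂ = 0) (h33 : φ₃ x₃ = 1)
    (A B : E →L[ℝ] E)
    (hA : A = φ₁.smulRight (-x₂ + x₃) + φ₂.smulRight (x₁ + x₂))
    (hB : B = (φ₂ + φ₃).smulRight x₂) :
    A * B = (φ₂ + φ₃).smulRight (x₁ + x₂) ∧
    B * A = φ₂.smulRight x₂ ∧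
    (∀ v : E, 0 ≤ v → (B * A) v ≤ (A * B) v) ∧
    (∀ v : E, 0 ≤ v → 0 ≤ (B * A) v) ∧
    (∀ v : E, 0 ≤ v → 0 ≤ B v) ∧
    (A * (A * B - B * A)) (x₁ + x₃) = x₁ + x₃ ∧
    x₁ + x₃ ≠ 0 :=
  counterexample_one_general x₁ x₂ x₃ hx₁ hx₂ hx₃ φ₁ φ₂ φ₃ hφ₂ hφ₃ h11 h12 h21 h22 h23 h31 h32 h33 A
    B hA hB
end

section
/- Let E be a Banach lattice of dimension at least 3, let x_1, x_2, x_3 be nonzero positive pairwise disjoint vectors of E, and let φ_1, φ_2, φ_3 be positive continuous linear functionals on E with φ_i(x_j) = δ_{ij}. Define the bounded finite-rank operators A = (x_2 + x_3) ⊗ φ_2 and B = x_2 ⊗ φ_1 + (x_2 − x_1) ⊗ φ_2 + x_1 ⊗ φ_3. Then A is positive, AB ≥ BA ≥ 0, and (AB − BA)B(x_2 + 2x_3) = x_2 + 2x_3, so 1 is in the spectrum of the operator (AB − BA)B (in particular AB − BA is not in the radical of the Banach algebra generated by A and B). -/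
/-!
The operators `A` and `B` are built from rank-one maps, so all products reduce to the
pairing `φᵢ xⱼ = δᵢⱼ`: one finds `AB = (x₂ + x₃) ⊗ (φ₁ + φ₂)`, `BA = x₂ ⊗ φ₂` and
`AB - BA = (x₂ + x₃) ⊗ φ₁ + x₃ ⊗ φ₂`, all visibly positive. Moreover `B` sends
`x₂ + 2x₃` to `x₁ + x₂`, which `AB - BA` sends back to `x₂ + 2x₃`; a nonzero fixed vector
puts `1` in the spectrum.
-/

theorem ContinuousLinearMap.mem_spectrum_of_apply_eq_smul {𝕜 E : Type*}
    [NontriviallyNormedField 𝕜] [NormedAddCommGroup E] [NormedSpace 𝕜 E]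
    {T : E →L[𝕜] E} {μ : 𝕜} {v : E} (hv : v ≠ 0) (hTv : T v = μ • v) :
    μ ∈ spectrum 𝕜 T := by
  rw [spectrum.mem_iff]
  intro hunit
  have hinj := ((Module.End.isUnit_iff _).1 (hunit.map toLinearMapRingHom)).injective
  exact hv (hinj (by simp [hTv]))

theorem ContinuousLinearMap.smulRight_apply_nonneg_s5 {E : Type*} [NormedAddCommGroup E]
    [PartialOrder E] [NormedSpace ℝ E] [PosSMulMono ℝ E] {φ : E →L[ℝ] ℝ} {x v : E}
    (hφ : ∀ v : E, 0 ≤ v → 0 ≤ φ v) (hx : 0 ≤ x) (hv : 0 ≤ v) : 0 ≤ φ.smulRight x v :=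
  smul_nonneg (hφ v hv) hx

namespace RankOneCounterexample

variable {E : Type*} [NormedAddCommGroup E] [NormedSpace ℝ E]

def opA (φ₂ : E →L[ℝ] ℝ) (x₂ x₃ : E) : E →L[ℝ] E :=
  φ₂.smulRight (x₂ + x₃)

def opB (φ₁ φ₂ φ₃ : E →L[ℝ] ℝ) (x₁ x₂ : E) : E →L[ℝ] E :=
  φ₁.smulRight x₂ + φ₂.smulRight (x₂ - x₁) + φ₃.smulRight x₁

variable {φ₁ φ₂ φ₃ : E →L[ℝ] ℝ} {x₁ x₂ x₃ : E}

@[simp]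
theorem opA_apply (v : E) : opA φ₂ x₂ x₃ v = φ₂ v • (x₂ + x₃) := by
  simp [opA]

@[simp]
theorem opB_apply (v : E) :
    opB φ₁ φ₂ φ₃ x₁ x₂ v = φ₁ v • x₂ + φ₂ v • (x₂ - x₁) + φ₃ v • x₁ := by
  simp [opB]

theorem opA_mul_opB_apply (h21 : φ₂ x₁ = 0) (h22 : φ₂ x₂ = 1) (v : E) :
    (opA φ₂ x₂ x₃ * opB φ₁ φ₂ φ₃ x₁ x₂) v = (φ₁ v + φ₂ v) • (x₂ + x₃) := by
  simp [h21, h22]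

theorem opB_mul_opA_apply (h12 : φ₁ x₂ = 0) (h13 : φ₁ x₃ = 0) (h22 : φ₂ x₂ = 1)
    (h23 : φ₂ x₃ = 0) (h32 : φ₃ x₂ = 0) (h33 : φ₃ x₃ = 1) (v : E) :
    (opB φ₁ φ₂ φ₃ x₁ x₂ * opA φ₂ x₂ x₃) v = φ₂ v • x₂ := by
  simp [h12, h13, h22, h23, h32, h33]
  module

theorem opA_mul_opB_sub_opB_mul_opA_apply (h12 : φ₁ x₂ = 0) (h13 : φ₁ x₃ = 0)
    (h21 : φ₂ x₁ = 0) (h22 : φ₂ x₂ = 1) (h23 : φ₂ x₃ = 0) (h32 : φ₃ x₂ = 0)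
    (h33 : φ₃ x₃ = 1) (v : E) :
    (opA φ₂ x₂ x₃ * opB φ₁ φ₂ φ₃ x₁ x₂ - opB φ₁ φ₂ φ₃ x₁ x₂ * opA φ₂ x₂ x₃) v =
      φ₁ v • (x₂ + x₃) + φ₂ v • x₃ := by
  rw [sub_apply, opA_mul_opB_apply h21 h22,
    opB_mul_opA_apply h12 h13 h22 h23 h32 h33]
  module

theorem opB_apply_add_two_smul (h12 : φ₁ x₂ = 0) (h13 : φ₁ x₃ = 0) (h22 : φ₂ x₂ = 1)
    (h23 : φ₂ x₃ = 0) (h32 : φ₃ x₂ = 0) (h33 : φ₃ x₃ = 1) :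
    opB φ₁ φ₂ φ₃ x₁ x₂ (x₂ + (2 : ℝ) • x₃) = x₁ + x₂ := by
  simp [h12, h13, h22, h23, h32, h33]
  module

theorem opA_mul_opB_sub_opB_mul_opA_mul_opB_apply (h11 : φ₁ x₁ = 1) (h12 : φ₁ x₂ = 0)
    (h13 : φ₁ x₃ = 0) (h21 : φ₂ x₁ = 0) (h22 : φ₂ x₂ = 1) (h23 : φ₂ x₃ = 0)
    (h32 : φ₃ x₂ = 0) (h33 : φ₃ x₃ = 1) :
    ((opA φ₂ x₂ x₃ * opB φ₁ φ₂ φ₃ x₁ x₂ - opB φ₁ φ₂ φ₃ x₁ x₂ * opA φ₂ x₂ x₃) *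
      opB φ₁ φ₂ φ₃ x₁ x₂) (x₂ + (2 : ℝ) • x₃) = x₂ + (2 : ℝ) • x₃ := by
  rw [mul_apply_eq_comp,
    opB_apply_add_two_smul h12 h13 h22 h23 h32 h33,
    opA_mul_opB_sub_opB_mul_opA_apply h12 h13 h21 h22 h23 h32 h33]
  simp [h11, h12, h21, h22]
  module

end RankOneCounterexample

open RankOneCounterexample in
theorem counterexample_two_general
    {E : Type*} [NormedAddCommGroup E] [Lattice E] [IsOrderedAddMonoid E]
    [NormedSpace ℝ E] [PosSMulStrictMono ℝ E]
    (x₁ x₂ x₃ : E) (hx₂ : 0 < x₂) (hx₃ : 0 < x₃)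
    (φ₁ φ₂ φ₃ : E →L[ℝ] ℝ)
    (hφ₁ : ∀ v : E, 0 ≤ v → 0 ≤ φ₁ v) (hφ₂ : ∀ v : E, 0 ≤ v → 0 ≤ φ₂ v)
    (h11 : φ₁ x₁ = 1) (h12 : φ₁ x₂ = 0) (h13 : φ₁ x₃ = 0)
    (h21 : φ₂ x₁ = 0) (h22 : φ₂ x₂ = 1) (h23 : φ₂ x₃ = 0)
    (h32 : φ₃ x₂ = 0) (h33 : φ₃ x₃ = 1)
    (A B : E →L[ℝ] E)
    (hA : A = φ₂.smulRight (x₂ + x₃))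
    (hB : B = φ₁.smulRight x₂ + φ₂.smulRight (x₂ - x₁) + φ₃.smulRight x₁) :
    (∀ v : E, 0 ≤ v → 0 ≤ A v) ∧
    (∀ v : E, 0 ≤ v → (B * A) v ≤ (A * B) v) ∧
    (∀ v : E, 0 ≤ v → 0 ≤ (B * A) v) ∧
    ((A * B - B * A) * B) (x₂ + (2 : ℝ) • x₃) = x₂ + (2 : ℝ) • x₃ ∧
    (1 : ℝ) ∈ spectrum ℝ ((A * B - B * A) * B) := by
  obtain rfl : A = opA φ₂ x₂ x₃ := hA
  obtain rfl : B = opB φ₁ φ₂ φ₃ x₁ x₂ := hB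
  have hfix := opA_mul_opB_sub_opB_mul_opA_mul_opB_apply h11 h12 h13 h21 h22 h23 h32 h33
  have hfix_ne : x₂ + (2 : ℝ) • x₃ ≠ 0 :=
    (add_pos_of_pos_of_nonneg hx₂ (smul_nonneg zero_le_two hx₃.le)).ne'
  refine ⟨fun v hv ↦ ?_, fun v hv ↦ ?_, fun v hv ↦ ?_, hfix, ?_⟩
  · exact ContinuousLinearMap.smulRight_apply_nonneg_s5 hφ₂ (add_nonneg hx₂.le hx₃.le) hv
  · rw [← sub_nonneg, ← sub_apply,
      opA_mul_opB_sub_opB_mul_opA_apply h12 h13 h21 h22 h23 h32 h33]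
    exact add_nonneg (smul_nonneg (hφ₁ v hv) (add_nonneg hx₂.le hx₃.le))
      (smul_nonneg (hφ₂ v hv) hx₃.le)
  · rw [opB_mul_opA_apply h12 h13 h22 h23 h32 h33]
    exact smul_nonneg (hφ₂ v hv) hx₂.le
  · exact ContinuousLinearMap.mem_spectrum_of_apply_eq_smul hfix_ne (by rw [hfix, one_smul])

/-- Counterexample: for `A = (x₂+x₃) ⊗ φ₂` and `B = x₂ ⊗ φ₁ + (x₂−x₁) ⊗ φ₂ + x₁ ⊗ φ₃`
one has `A ≥ 0`, `AB ≥ BA ≥ 0`, `(AB−BA)B(x₂+2x₃) = x₂+2x₃`, and hence `1` lies in the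
spectrum of `(AB−BA)B`.  (Here `x ⊗ φ` is `φ.smulRight x`.) -/
theorem counterexample_two
    {E : Type*} [NormedAddCommGroup E] [Lattice E] [HasSolidNorm E] [IsOrderedAddMonoid E]
    [NormedSpace ℝ E] [PosSMulStrictMono ℝ E] [PosSMulReflectLT ℝ E]
    [CompleteSpace E] (hdim : (3 : Cardinal) ≤ Module.rank ℝ E)
    (x₁ x₂ x₃ : E) (hx₁ : 0 < x₁) (hx₂ : 0 < x₂) (hx₃ : 0 < x₃)
    (hd12 : |x₁| ⊓ |x₂| = 0) (hd13 : |x₁| ⊓ |x₃| = 0) (hd23 : |x₂| ⊓ |x₃| = 0)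
    (φ₁ φ₂ φ₃ : E →L[ℝ] ℝ)
    (hφ₁ : ∀ v : E, 0 ≤ v → 0 ≤ φ₁ v) (hφ₂ : ∀ v : E, 0 ≤ v → 0 ≤ φ₂ v)
    (hφ₃ : ∀ v : E, 0 ≤ v → 0 ≤ φ₃ v)
    (h11 : φ₁ x₁ = 1) (h12 : φ₁ x₂ = 0) (h13 : φ₁ x₃ = 0)
    (h21 : φ₂ x₁ = 0) (h22 : φ₂ x₂ = 1) (h23 : φ₂ x₃ = 0)
    (h31 : φ₃ x₁ = 0) (h32 : φ₃ x₂ = 0) (h33 : φ₃ x₃ = 1)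
    (A B : E →L[ℝ] E)
    (hA : A = φ₂.smulRight (x₂ + x₃))
    (hB : B = φ₁.smulRight x₂ + φ₂.smulRight (x₂ - x₁) + φ₃.smulRight x₁) :
    (∀ v : E, 0 ≤ v → 0 ≤ A v) ∧
    (∀ v : E, 0 ≤ v → (B * A) v ≤ (A * B) v) ∧
    (∀ v : E, 0 ≤ v → 0 ≤ (B * A) v) ∧
    ((A * B - B * A) * B) (x₂ + (2 : ℝ) • x₃) = x₂ + (2 : ℝ) • x₃ ∧
    (1 : ℝ) ∈ spectrum ℝ ((A * B - B * A) * B) :=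
  counterexample_two_general x₁ x₂ x₃ hx₂ hx₃ φ₁ φ₂ φ₃ hφ₁ hφ₂ h11 h12 h13 h21 h22 h23 h32 h33 A B
    hA hB
end

section
/- Suppose that matrices A and B in M_2(ℝ) satisfy AB ≥ BA ≥ 0 (entrywise). Then either AB = BA, or A and B are simultaneously completely decomposable, i.e., there exists a 2×2 permutation matrix P such that both P⁻¹AP and P⁻¹BP are upper triangular. -/
/-!
The commutator `C = AB - BA` is entrywise nonnegative with zero trace, so its diagonal vanishes
and `C = !![0, x; y, 0]` with `x, y ≥ 0`. The vanishing of `C 0 0` says that `(A 1 0, A 0 1)` and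
`(B 1 0, B 0 1)` are both orthogonal to `(x, y)`; this forces `x (BA)₁₀ + y (AB)₀₁ = 0` and
`x (AB)₁₀ + y (BA)₀₁ = 0`, sums of nonnegative terms, so `x y = y ((AB)₀₁ - (BA)₀₁) = 0`.
If `x = y = 0` the matrices commute; if `x ≠ 0` both are upper triangular; if `y ≠ 0` both are
lower triangular, and the transposition conjugates them to upper triangular form.
-/

namespace Matrix

lemma diag_eq_of_diag_le_of_trace_eq {n R : Type*} [Fintype n] [AddCommMonoid R] [PartialOrder R]
    [IsOrderedCancelAddMonoid R] {M N : Matrix n n R} (hle : M.diag ≤ N.diag)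
    (htr : M.trace = N.trace) : M.diag = N.diag :=
  funext ((Finset.sum_eq_sum_iff_of_le fun i _ => hle i).1 htr · (Finset.mem_univ _))

lemma diag_mul_comm_of_mul_le_mul {n R : Type*} [Fintype n] [CommRing R] [PartialOrder R]
    [IsOrderedRing R] {A B : Matrix n n R} (hAB : ∀ i j, (B * A) i j ≤ (A * B) i j) :
    (A * B).diag = (B * A).diag :=
  (diag_eq_of_diag_le_of_trace_eq (fun i => hAB i i) (trace_mul_comm B A)).symm

lemma inv_permMatrix_mul_mul_permMatrix {n R : Type*} [Fintype n] [DecidableEq n] [CommRing R]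
    (σ : Equiv.Perm n) (A : Matrix n n R) :
    (σ.permMatrix R)⁻¹ * A * σ.permMatrix R = A.submatrix σ.symm σ.symm := by
  have hinv : (σ.permMatrix R)⁻¹ = σ⁻¹.permMatrix R :=
    inv_eq_left_inv (by rw [← permMatrix_mul, mul_inv_cancel, permMatrix_one])
  rw [hinv, PEquiv.toMatrix_toPEquiv_mul, PEquiv.mul_toMatrix_toPEquiv, submatrix_submatrix]
  rfl

section FinTwo

variable {R : Type*}

lemma blockTriangular_id_fin_two_iff [Zero R] {M : Matrix (Fin 2) (Fin 2) R} :
    M.BlockTriangular id ↔ M 1 0 = 0 := by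
  refine ⟨fun h => h (by decide), fun h i j hij => ?_⟩
  fin_cases i <;> fin_cases j <;> first | exact h | exact absurd hij (by decide)

lemma inv_permMatrix_mul_mul_permMatrix_blockTriangular_iff [CommRing R]
    (σ : Equiv.Perm (Fin 2)) (A : Matrix (Fin 2) (Fin 2) R) :
    ((σ.permMatrix R)⁻¹ * A * σ.permMatrix R).BlockTriangular id ↔
      A (σ.symm 1) (σ.symm 0) = 0 := by
  rw [inv_permMatrix_mul_mul_permMatrix, blockTriangular_id_fin_two_iff, submatrix_apply]

lemma fin_two_offDiag_dotProduct_commutator_eq_zero [CommRing R] {A B : Matrix (Fin 2) (Fin 2) R}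
    (h : (A * B) 0 0 = (B * A) 0 0) :
    A 1 0 * (A * B - B * A) 0 1 + A 0 1 * (A * B - B * A) 1 0 = 0 ∧
      B 1 0 * (A * B - B * A) 0 1 + B 0 1 * (A * B - B * A) 1 0 = 0 := by
  simp only [sub_apply, mul_apply, Fin.sum_univ_two] at h ⊢
  constructor
  · linear_combination (A 1 1 - A 0 0) * h
  · linear_combination (B 1 1 - B 0 0) * h

lemma fin_two_weighted_offDiag_mul_eq_zero [CommRing R] {A B : Matrix (Fin 2) (Fin 2) R}
    {x y : R} (hA : A 1 0 * x + A 0 1 * y = 0) (hB : B 1 0 * x + B 0 1 * y = 0) :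
    x * (B * A) 1 0 + y * (A * B) 0 1 = 0 := by
  simp only [mul_apply, Fin.sum_univ_two]
  linear_combination A 0 0 * hB + B 1 1 * hA

lemma fin_two_commutator_offDiag_mul_eq_zero [CommRing R] [PartialOrder R] [IsOrderedRing R]
    {A B : Matrix (Fin 2) (Fin 2) R}
    (hBA : ∀ i j, 0 ≤ (B * A) i j) (hAB : ∀ i j, (B * A) i j ≤ (A * B) i j) :
    (A * B - B * A) 0 1 * (A * B - B * A) 1 0 = 0 := by
  set x := (A * B - B * A) 0 1 with hx
  set y := (A * B - B * A) 1 0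
  obtain ⟨hA, hB⟩ :=
    fin_two_offDiag_dotProduct_commutator_eq_zero (congrFun (diag_mul_comm_of_mul_le_mul hAB) 0)
  have hx0 : 0 ≤ x := sub_nonneg.2 (hAB 0 1)
  have hy0 : 0 ≤ y := sub_nonneg.2 (hAB 1 0)
  have hyAB : y * (A * B) 0 1 = 0 :=
    ((add_eq_zero_iff_of_nonneg (mul_nonneg hx0 (hBA 1 0))
      (mul_nonneg hy0 ((hBA 0 1).trans (hAB 0 1)))).1
      (fin_two_weighted_offDiag_mul_eq_zero hA hB)).2
  have hyBA : y * (B * A) 0 1 = 0 :=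
    ((add_eq_zero_iff_of_nonneg (mul_nonneg hx0 ((hBA 1 0).trans (hAB 1 0)))
      (mul_nonneg hy0 (hBA 0 1))).1
      (fin_two_weighted_offDiag_mul_eq_zero hB hA)).2
  rw [mul_comm, hx, sub_apply, mul_sub, hyAB, hyBA, sub_self]

end FinTwo

end Matrix

/-- If `A, B ∈ M₂(ℝ)` satisfy `AB ≥ BA ≥ 0` entrywise, then either `AB = BA` or `A` and `B`
are simultaneously completely decomposable: some permutation matrix `P` conjugates both to
upper triangular form. -/
theorem two_by_two_semicommuting_decomposable
    (A B : Matrix (Fin 2) (Fin 2) ℝ)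
    (hBA : ∀ i j, 0 ≤ (B * A) i j)
    (hAB : ∀ i j, (B * A) i j ≤ (A * B) i j) :
    A * B = B * A ∨
    ∃ P : Matrix (Fin 2) (Fin 2) ℝ,
      (∃ σ : Equiv.Perm (Fin 2), P = σ.toPEquiv.toMatrix) ∧
      (P⁻¹ * A * P).BlockTriangular id ∧ (P⁻¹ * B * P).BlockTriangular id := by
  have hdiag := Matrix.diag_mul_comm_of_mul_le_mul hAB
  obtain ⟨hA, hB⟩ := Matrix.fin_two_offDiag_dotProduct_commutator_eq_zero (congrFun hdiag 0)
  have hxy := Matrix.fin_two_commutator_offDiag_mul_eq_zero hBA hAB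
  have hconj := Matrix.inv_permMatrix_mul_mul_permMatrix_blockTriangular_iff (R := ℝ)
  by_cases hx : (A * B - B * A) 0 1 = 0 <;> by_cases hy : (A * B - B * A) 1 0 = 0
  · left
    refine sub_eq_zero.1 (Matrix.ext fun i j => ?_)
    fin_cases i <;> fin_cases j
    exacts [sub_eq_zero.2 (congrFun hdiag 0), hx, hy, sub_eq_zero.2 (congrFun hdiag 1)]
  · right
    rw [hx, mul_zero, zero_add] at hA hB
    refine ⟨_, ⟨Equiv.swap 0 1, rfl⟩, (hconj _ A).2 ?_, (hconj _ B).2 ?_⟩ <;>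
      simp only [Equiv.symm_swap, Equiv.swap_apply_left, Equiv.swap_apply_right]
    · exact (mul_eq_zero.1 hA).resolve_right hy
    · exact (mul_eq_zero.1 hB).resolve_right hy
  · right
    rw [hy, mul_zero, add_zero] at hA hB
    refine ⟨_, ⟨1, rfl⟩, (hconj _ A).2 ?_, (hconj _ B).2 ?_⟩
    · exact (mul_eq_zero.1 hA).resolve_right hx
    · exact (mul_eq_zero.1 hB).resolve_right hx
  · exact absurd hxy (mul_ne_zero hx hy)
end

section
/- Let X be a Banach space and let T be a compact unicellular operator on X. If M is a closed subspace of X invariant under T such that the closure of T(M) is a proper subspace of M, then the closure of T(M) has codimension exactly 1 in M, i.e., the quotient space M / closure(T(M)) is one-dimensional. -/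
/-! For `v ∈ M` the subspace `N ⊔ span {v}`, where `N` is the closure of `T(M)`, is closed
(a closed subspace plus a line) and `T`-invariant (it lies in `M`, which `T` maps into `N`).
Unicellularity makes these subspaces totally ordered, so any two vectors of `M ⧸ N` are
proportional, and `M ⧸ N` is a line because `N ≠ M`. -/

open Module Submodule

theorem finrank_eq_one_of_mem_span_singleton_total {K V : Type*} [DivisionRing K]
    [AddCommGroup V] [Module K V] [Nontrivial V] (h : ∀ u w : V, u ∈ K ∙ w ∨ w ∈ K ∙ u) :
    finrank K V = 1 := by
  obtain ⟨v, hv⟩ := exists_ne (0 : V)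
  refine finrank_eq_one v hv fun w => ?_
  rcases h v w with hvw | hwv
  · obtain ⟨c, rfl⟩ := mem_span_singleton.1 hvw
    have hc : c ≠ 0 := by rintro rfl; exact hv (zero_smul K w)
    exact ⟨c⁻¹, by rw [smul_smul, inv_mul_cancel₀ hc, one_smul]⟩
  · exact mem_span_singleton.1 hwv

theorem Submodule.Quotient.mk_mem_span_singleton_of_mem_sup {K V : Type*} [DivisionRing K]
    [AddCommGroup V] [Module K V] {N M : Submodule K V} {y z : M}
    (h : (y : V) ∈ N ⊔ K ∙ (z : V)) :
    (Quotient.mk y : M ⧸ N.comap M.subtype) ∈ K ∙ (Quotient.mk z : M ⧸ N.comap M.subtype) := by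
  obtain ⟨n, hn, s, hs, hy⟩ := mem_sup.1 h
  obtain ⟨c, rfl⟩ := mem_span_singleton.1 hs
  refine mem_span_singleton.2 ⟨c, ?_⟩
  rw [← Quotient.mk_smul, Quotient.eq, mem_comap]
  convert N.neg_mem hn using 1
  simp [← hy]

theorem finrank_quotient_eq_one_of_sup_span_singleton_total {K V : Type*} [DivisionRing K]
    [AddCommGroup V] [Module K V] {N M : Submodule K V} (hlt : N < M)
    (htotal : ∀ y ∈ M, ∀ z ∈ M, N ⊔ K ∙ y ≤ N ⊔ K ∙ z ∨ N ⊔ K ∙ z ≤ N ⊔ K ∙ y) :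
    finrank K (M ⧸ N.comap M.subtype) = 1 := by
  obtain ⟨x, hxM, hxN⟩ := SetLike.exists_of_lt hlt
  have : Nontrivial (M ⧸ N.comap M.subtype) :=
    ⟨Submodule.Quotient.mk ⟨x, hxM⟩, 0, by rwa [Ne, Quotient.mk_eq_zero, mem_comap]⟩
  refine finrank_eq_one_of_mem_span_singleton_total fun u w => ?_
  obtain ⟨y, rfl⟩ := Submodule.Quotient.mk_surjective _ u
  obtain ⟨z, rfl⟩ := Submodule.Quotient.mk_surjective _ w
  have mem_sup_self (v : V) : v ∈ N ⊔ K ∙ v := mem_sup_right (mem_span_singleton_self v)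
  rcases htotal y y.2 z z.2 with hyz | hzy
  · exact .inl (Quotient.mk_mem_span_singleton_of_mem_sup (hyz (mem_sup_self y)))
  · exact .inr (Quotient.mk_mem_span_singleton_of_mem_sup (hzy (mem_sup_self z)))

theorem compact_unicellular_codim_one_general
    {X : Type*} [NormedAddCommGroup X] [NormedSpace ℝ X]
    (T : X →L[ℝ] X)
    (huni : ∀ M N : Submodule ℝ X, IsClosed (M : Set X) → IsClosed (N : Set X) →
      (∀ x ∈ M, T x ∈ M) → (∀ x ∈ N, T x ∈ N) → M ≤ N ∨ N ≤ M)
    (M : Submodule ℝ X)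
    (hlt : (M.map (T : X →ₗ[ℝ] X)).topologicalClosure < M) :
    Module.finrank ℝ (M ⧸ ((M.map (T : X →ₗ[ℝ] X)).topologicalClosure.comap M.subtype)) = 1 := by
  set N := (M.map (T : X →ₗ[ℝ] X)).topologicalClosure
  have hN : IsClosed (N : Set X) := isClosed_topologicalClosure _
  have hinv (v : X) (hv : v ∈ M) (z : X) (hz : z ∈ N ⊔ ℝ ∙ v) : T z ∈ N ⊔ ℝ ∙ v := by
    have hzM : z ∈ M := sup_le hlt.le ((span_singleton_le_iff_mem v M).2 hv) hz
    exact mem_sup_left (le_topologicalClosure _ (mem_map_of_mem hzM))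
  refine finrank_quotient_eq_one_of_sup_span_singleton_total hlt fun y hy z hz => ?_
  exact huni _ _ (isClosed_sup_finiteDimensional _ _ hN) (isClosed_sup_finiteDimensional _ _ hN)
    (hinv y hy) (hinv z hz)

/-- If `T` is a compact unicellular operator on a Banach space `X` and `M` is a closed
`T`-invariant subspace such that the closure of `T(M)` is a proper subspace of `M`, then
the closure of `T(M)` has codimension exactly `1` in `M`. -/
theorem compact_unicellular_codim_one
    {X : Type*} [NormedAddCommGroup X] [NormedSpace ℝ X] [CompleteSpace X]
    (T : X →L[ℝ] X) (hTc : IsCompactOperator T)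
    (huni : ∀ M N : Submodule ℝ X, IsClosed (M : Set X) → IsClosed (N : Set X) →
      (∀ x ∈ M, T x ∈ M) → (∀ x ∈ N, T x ∈ N) → M ≤ N ∨ N ≤ M)
    (M : Submodule ℝ X) (hM : IsClosed (M : Set X)) (hMinv : ∀ x ∈ M, T x ∈ M)
    (hlt : (M.map (T : X →ₗ[ℝ] X)).topologicalClosure < M) :
    Module.finrank ℝ (M ⧸ ((M.map (T : X →ₗ[ℝ] X)).topologicalClosure.comap M.subtype)) = 1 :=
  compact_unicellular_codim_one_general T huni M hlt
end

section
/- Let S be a Donoghue operator on ℓ², i.e., S e₀ = 0 and S eₙ = wₙ eₙ₋₁ for n ≥ 1, where (eₙ)_{n≥0} is the standard orthonormal basis of ℓ² and (wₙ)_{n≥1} is a sequence of positive real numbers that is monotone decreasing and square-summable. If a positive bounded operator T on ℓ² semi-commutes with S (i.e., TS ≥ ST or ST ≥ TS), then S and T are simultaneously ideal-triangularizable; in particular, for every n ≥ 0 the subspace M_n spanned by e₀, …, eₙ is invariant under T. -/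
/-!
Write `t j k = (T eₖ) j ≥ 0`. Since `(S y) j = w (j+1) y (j+1)`, testing the semi-commutation on
`eₖ` gives either `w (j+1) t (j+1) (k+1) ≤ w (k+1) t j k` (and `w (j+1) t (j+1) 0 ≤ 0`), or the
reverse inequality. In the first case the entries below the diagonal vanish column by column.
In the second, along the diagonal through `(k+d+1, k)` the product of `t` with the `d+1`
consecutive weights `w (k+n+1), …, w (k+n+d+1)` is nondecreasing in `n`, while it is at most
`‖T‖` times that weight product, which tends to `0` because `w` is square-summable.
Either way `T` is upper triangular, like `S`. The closed ideals of `ℓ²` are the spaces of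
sequences supported in a fixed set of indices; those for initial segments form a maximal chain,
and an upper triangular operator leaves each of them invariant.
-/

open Filter Topology Set

namespace Donoghue

section WeightedArrays

variable {w : ℕ → ℝ} {t : ℕ → ℕ → ℝ}

theorem subdiagonal_eq_zero_of_shift_le (hw : ∀ n, 0 < w (n + 1)) (ht : ∀ j k, 0 ≤ t j k)
    (h₀ : ∀ j, w (j + 1) * t (j + 1) 0 ≤ 0)
    (h : ∀ j k, w (j + 1) * t (j + 1) (k + 1) ≤ w (k + 1) * t j k) :
    ∀ {j k : ℕ}, k < j → t j k = 0 := by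
  intro j k hkj
  induction k generalizing j with
  | zero =>
    obtain ⟨i, rfl⟩ : ∃ i, j = i + 1 := ⟨j - 1, by omega⟩
    exact le_antisymm (nonpos_of_mul_nonpos_right (h₀ i) (hw i)) (ht _ _)
  | succ k ih =>
    obtain ⟨i, rfl⟩ : ∃ i, j = i + 1 := ⟨j - 1, by omega⟩
    have hle := h i k
    rw [ih (by omega), mul_zero] at hle
    exact le_antisymm (nonpos_of_mul_nonpos_right hle (hw i)) (ht _ _)

theorem subdiagonal_eq_zero_of_le_shift (hw : ∀ n, 0 < w (n + 1))
    (hlim : Tendsto (fun n => w (n + 1)) atTop (𝓝 0)) (ht : ∀ j k, 0 ≤ t j k) {C : ℝ}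
    (hC : ∀ j k, t j k ≤ C) (h : ∀ j k, w (k + 1) * t j k ≤ w (j + 1) * t (j + 1) (k + 1)) :
    ∀ {j k : ℕ}, k < j → t j k = 0 := by
  intro j k hkj
  obtain ⟨d, rfl⟩ := Nat.exists_eq_add_of_lt hkj
  set window : ℕ → ℝ := fun n => ∏ i ∈ Finset.range (d + 1), w (k + i + n + 1)
  have window_pos : ∀ n, 0 < window n := fun n => Finset.prod_pos fun i _ => hw _
  have window_succ : ∀ n, window n * w (k + d + 1 + n + 1) = window (n + 1) * w (k + n + 1) := by
    intro n
    have := (Finset.prod_range_succ (fun i => w (k + i + n + 1)) (d + 1)).symm.trans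
      (Finset.prod_range_succ' (fun i => w (k + i + n + 1)) (d + 1))
    convert this using 2
    · ring_nf
    · exact Finset.prod_congr rfl fun i _ => by ring_nf
    · simp
  have window_lim : Tendsto window atTop (𝓝 0) := by
    have := tendsto_finsetProd (Finset.range (d + 1)) fun i _ =>
      hlim.comp (tendsto_atTop_mono (fun n => Nat.le_add_left n (k + i)) tendsto_id)
    simpa using this
  set a : ℕ → ℝ := fun n => window n * t (k + d + 1 + n) (k + n)
  have a_mono : Monotone a := monotone_nat_of_le_succ fun n => by
    have step := mul_le_mul_of_nonneg_left (h (k + d + 1 + n) (k + n)) (window_pos n).le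
    rw [← mul_assoc, ← mul_assoc, window_succ, mul_right_comm, mul_right_comm (window (n + 1))]
      at step
    exact le_of_mul_le_mul_right step (hw _)
  have a_zero_nonpos : a 0 ≤ 0 := by
    refine ge_of_tendsto' (by simpa using window_lim.mul_const C) fun n => ?_
    exact (a_mono n.zero_le).trans (mul_le_mul_of_nonneg_left (hC _ _) (window_pos n).le)
  exact le_antisymm (nonpos_of_mul_nonpos_right a_zero_nonpos (window_pos 0)) (ht _ _)

end WeightedArrays

open scoped lp

local notation:max "𝐞" k:max => (lp.single 2 k (1 : ℝ) : lp (fun _ : ℕ => ℝ) 2)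

theorem single_one_apply_nonneg (k j : ℕ) : 0 ≤ 𝐞 k j := by
  rw [lp.single_apply, Pi.single_apply]
  split_ifs <;> norm_num

theorem hasSum_apply_apply (A : ℓ²(ℕ, ℝ) →L[ℝ] ℓ²(ℕ, ℝ)) (y : ℓ²(ℕ, ℝ)) (j : ℕ) :
    HasSum (fun n => y n * A (𝐞 n) j) (A y j) := by
  have h := ((lp.hasSum_single (by norm_num) y).mapL A).mapL (lp.evalCLM ℝ (fun _ : ℕ => ℝ) 2 j)
  have hterm : ∀ n, lp.evalCLM ℝ (fun _ : ℕ => ℝ) 2 j (A (lp.single 2 n (y n))) =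
      y n * A (𝐞 n) j := fun n => by
    rw [show lp.single 2 n (y n) = y n • 𝐞 n by rw [← lp.single_smul, smul_eq_mul, mul_one],
      map_smul]
    rfl
  simp only [hterm] at h
  exact h

def band (s : Set ℕ) : Submodule ℝ ℓ²(ℕ, ℝ) where
  carrier := {x | ∀ k ∉ s, x k = 0}
  add_mem' hx hy k hk := by simp [hx k hk, hy k hk]
  zero_mem' _ _ := rfl
  smul_mem' c x hx k hk := by simp [hx k hk]

theorem mem_band {s : Set ℕ} {x : ℓ²(ℕ, ℝ)} : x ∈ band s ↔ ∀ k ∉ s, x k = 0 := Iff.rfl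

theorem single_one_mem_band {s : Set ℕ} {k : ℕ} : 𝐞 k ∈ band s ↔ k ∈ s := by
  refine ⟨fun h => by_contra fun hk => by simpa using h k hk, fun hk j hj => ?_⟩
  exact lp.single_apply_ne 2 k _ (ne_of_mem_of_not_mem hk hj).symm

theorem band_le_band_iff {s t : Set ℕ} : band s ≤ band t ↔ s ⊆ t :=
  ⟨fun h _ hk => single_one_mem_band.1 (h (single_one_mem_band.2 hk)),
    fun h _ hx k hk => hx k fun hks => hk (h hks)⟩

theorem band_mono : Monotone band := fun _ _ h => band_le_band_iff.2 h

theorem isClosed_band (s : Set ℕ) : IsClosed (band s : Set ℓ²(ℕ, ℝ)) := by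
  have : (band s : Set ℓ²(ℕ, ℝ)) = ⋂ k ∈ sᶜ, {x | x k = 0} := by ext; simp [mem_band]
  rw [this]
  exact isClosed_biInter fun k _ =>
    isClosed_eq (lp.evalCLM ℝ (fun _ : ℕ => ℝ) 2 k).continuous continuous_const

theorem band_eq_topologicalClosure_span (s : Set ℕ) :
    band s = (Submodule.span ℝ ((fun k => 𝐞 k) '' s)).topologicalClosure := by
  refine le_antisymm (fun x hx => ?_)
    (Submodule.topologicalClosure_minimal _ (Submodule.span_le.2 ?_) (isClosed_band s))
  · refine mem_closure_of_tendsto (lp.hasSum_single (by norm_num) x)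
      (Eventually.of_forall fun F => Submodule.sum_mem _ fun k _ => ?_)
    by_cases hk : k ∈ s
    · rw [show lp.single 2 k (x k) = x k • 𝐞 k by rw [← lp.single_smul, smul_eq_mul, mul_one]]
      exact Submodule.smul_mem _ _ (Submodule.subset_span (mem_image_of_mem _ hk))
    · rw [hx k hk, lp.single_zero]
      exact zero_mem _
  · rintro _ ⟨k, hk, rfl⟩
    exact single_one_mem_band.2 hk

theorem span_eq_band_of_finite {s : Set ℕ} (hs : s.Finite) :
    Submodule.span ℝ ((fun k => 𝐞 k) '' s) = band s := by
  have : FiniteDimensional ℝ (Submodule.span ℝ ((fun k => 𝐞 k) '' s)) :=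
    FiniteDimensional.span_of_finite ℝ (hs.image _)
  rw [band_eq_topologicalClosure_span,
    (Submodule.closed_of_finiteDimensional _).submodule_topologicalClosure_eq]

def IsClosedIdeal (M : Submodule ℝ ℓ²(ℕ, ℝ)) : Prop :=
  IsClosed (M : Set ℓ²(ℕ, ℝ)) ∧ ∀ x y : ℓ²(ℕ, ℝ), (∀ k, |x k| ≤ |y k|) → y ∈ M → x ∈ M

theorem isClosedIdeal_band (s : Set ℕ) : IsClosedIdeal (band s) := by
  refine ⟨isClosed_band s, fun x y hxy hy k hk => abs_eq_zero.1 ?_⟩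
  exact le_antisymm ((hxy k).trans_eq (by rw [hy k hk, abs_zero])) (abs_nonneg _)

theorem IsClosedIdeal.eq_band {M : Submodule ℝ ℓ²(ℕ, ℝ)} (hM : IsClosedIdeal M) :
    M = band {k | 𝐞 k ∈ M} := by
  apply le_antisymm
  · intro x hx k hk
    by_contra hxk
    refine hk (hM.2 _ ((x k)⁻¹ • x) (fun j => ?_) (M.smul_mem _ hx))
    rcases eq_or_ne j k with rfl | hjk
    · simp [hxk]
    · simp only [lp.single_apply, Pi.single_eq_of_ne hjk, abs_zero]
      positivity
  · rw [band_eq_topologicalClosure_span]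
    refine Submodule.topologicalClosure_minimal _ (Submodule.span_le.2 ?_) hM.1
    rintro _ ⟨k, hk, rfl⟩
    exact hk

theorem isLowerSet_of_forall_comparable_Iio {α : Type*} [LinearOrder α] {s : Set α}
    (h : ∀ a, s ⊆ Iio a ∨ Iio a ⊆ s) :
    IsLowerSet s := by
  intro m l hlm hm
  rcases hlm.lt_or_eq with hlm | rfl
  · exact (h m).resolve_left (fun hsub => lt_irrefl m (hsub hm)) hlm
  · exact hm

def lowerBands : Set (Submodule ℝ ℓ²(ℕ, ℝ)) := band '' {s | IsLowerSet s}

theorem isChain_lowerBands : IsChain (· ≤ ·) lowerBands :=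
  IsChain.image_of_map_rel (· ⊆ ·) _ band (fun _ _ h => band_mono h)
    fun _ hs _ ht _ => IsLowerSet.total hs ht

theorem eq_lowerBands_of_superset {𝒞 : Set (Submodule ℝ ℓ²(ℕ, ℝ))} (hsub : lowerBands ⊆ 𝒞)
    (hchain : IsChain (· ≤ ·) 𝒞) (hideal : ∀ M ∈ 𝒞, IsClosedIdeal M) : 𝒞 = lowerBands := by
  refine subset_antisymm (fun M hM => ?_) hsub
  obtain ⟨s, rfl⟩ : ∃ s, M = band s := ⟨_, (hideal M hM).eq_band⟩
  refine ⟨s, isLowerSet_of_forall_comparable_Iio fun n => ?_, rfl⟩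
  simpa only [band_le_band_iff] using hchain.total hM (hsub ⟨Iio n, isLowerSet_Iio n, rfl⟩)

def IsUpperTriangular (A : ℓ²(ℕ, ℝ) →L[ℝ] ℓ²(ℕ, ℝ)) : Prop :=
  ∀ j k, k < j → A (𝐞 k) j = 0

theorem IsUpperTriangular.apply_mem_band {A : ℓ²(ℕ, ℝ) →L[ℝ] ℓ²(ℕ, ℝ)}
    (hA : IsUpperTriangular A) {s : Set ℕ} (hs : IsLowerSet s) : ∀ x ∈ band s, A x ∈ band s := by
  have : band s ≤ (band s).comap (A : ℓ²(ℕ, ℝ) →ₗ[ℝ] ℓ²(ℕ, ℝ)) := by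
    refine (band_eq_topologicalClosure_span s).le.trans <|
      Submodule.topologicalClosure_minimal _ (Submodule.span_le.2 ?_)
        ((isClosed_band s).preimage A.continuous)
    rintro _ ⟨k, hk, rfl⟩ j hj
    exact hA j k (lt_of_not_ge fun hjk => hj (hs hjk hk))
  exact fun x hx => this hx

section DonoghueOperator

variable {w : ℕ → ℝ} {S : ℓ²(ℕ, ℝ) →L[ℝ] ℓ²(ℕ, ℝ)}

theorem donoghue_apply (hS₀ : S (𝐞 0) = 0) (hS : ∀ n, S (𝐞 (n + 1)) = w (n + 1) • 𝐞 n)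
    (y : ℓ²(ℕ, ℝ)) (j : ℕ) : S y j = w (j + 1) * y (j + 1) := by
  have hterm : ∀ n, S (𝐞 n) j = if n = j + 1 then w (j + 1) else 0 := by
    rintro (_ | m)
    · simp [hS₀]
    · rw [hS m]
      rcases eq_or_ne m j with rfl | h
      · simp
      · simp [h]
  have := (hasSum_apply_apply S y j).unique (hasSum_single (j + 1) fun n hn => by simp [hterm, hn])
  simpa [hterm, mul_comm] using this

theorem isUpperTriangular_donoghue (hS₀ : S (𝐞 0) = 0)
    (hS : ∀ n, S (𝐞 (n + 1)) = w (n + 1) • 𝐞 n) : IsUpperTriangular S := by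
  rintro j (_ | k) hkj
  · simp [hS₀]
  · simp [hS k, Pi.single_eq_of_ne (by omega : j ≠ k)]

theorem isUpperTriangular_of_semicommute (hw : ∀ n, 0 < w (n + 1))
    (hsum : Summable fun n => w (n + 1) ^ 2) (hS₀ : S (𝐞 0) = 0)
    (hS : ∀ n, S (𝐞 (n + 1)) = w (n + 1) • 𝐞 n) {T : ℓ²(ℕ, ℝ) →L[ℝ] ℓ²(ℕ, ℝ)}
    (hT : ∀ x : ℓ²(ℕ, ℝ), (∀ k, 0 ≤ x k) → ∀ k, 0 ≤ T x k)
    (hsemi : (∀ x : ℓ²(ℕ, ℝ), (∀ k, 0 ≤ x k) → ∀ k, (S * T) x k ≤ (T * S) x k) ∨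
      (∀ x : ℓ²(ℕ, ℝ), (∀ k, 0 ≤ x k) → ∀ k, (T * S) x k ≤ (S * T) x k)) :
    IsUpperTriangular T := by
  set t : ℕ → ℕ → ℝ := fun j k => T (𝐞 k) j
  have ht : ∀ j k, 0 ≤ t j k := fun j k => hT _ (single_one_apply_nonneg k) j
  have hST : ∀ j k, S (T (𝐞 k)) j = w (j + 1) * t (j + 1) k := fun j k =>
    donoghue_apply hS₀ hS _ j
  have hTS : ∀ j k, T (S (𝐞 (k + 1))) j = w (k + 1) * t j k := by simp [hS, t]
  intro j k hkj
  rcases hsemi with h | h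
  · refine subdiagonal_eq_zero_of_shift_le hw ht (fun j => ?_) (fun j k => ?_) hkj
    · simpa [hST, hS₀] using h _ (single_one_apply_nonneg 0) j
    · simpa [hST, hTS] using h _ (single_one_apply_nonneg (k + 1)) j
  · have hlim : Tendsto (fun n => w (n + 1)) atTop (𝓝 0) := by
      simpa [Real.sqrt_sq (hw _).le] using hsum.tendsto_atTop_zero.sqrt
    have hbound : ∀ j k, t j k ≤ ‖T‖ := fun j k =>
      calc t j k ≤ ‖T (𝐞 k)‖ :=
            (Real.le_norm_self _).trans (lp.norm_apply_le_norm two_ne_zero _ j)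
        _ ≤ ‖T‖ * ‖𝐞 k‖ := T.le_opNorm _
        _ = ‖T‖ := by rw [lp.norm_single (by norm_num), norm_one, mul_one]
    refine subdiagonal_eq_zero_of_le_shift hw hlim ht hbound (fun j k => ?_) hkj
    simpa [hST, hTS] using h _ (single_one_apply_nonneg (k + 1)) j

end DonoghueOperator

end Donoghue

open Donoghue in
theorem donoghue_semicommuting_ideal_triangularizable_general
    (w : ℕ → ℝ) (hw : ∀ n : ℕ, 0 < w (n + 1))
    (hsum : Summable fun n : ℕ => w (n + 1) ^ 2)
    (S T : lp (fun _ : ℕ => ℝ) 2 →L[ℝ] lp (fun _ : ℕ => ℝ) 2)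
    (hS0 : S (lp.single 2 0 (1 : ℝ)) = 0)
    (hSn : ∀ n : ℕ, S (lp.single 2 (n + 1) (1 : ℝ)) = w (n + 1) • lp.single 2 n (1 : ℝ))
    (hT : ∀ x : lp (fun _ : ℕ => ℝ) 2, (∀ k, 0 ≤ x k) → ∀ k, 0 ≤ (T x) k)
    (hsemi : (∀ x : lp (fun _ : ℕ => ℝ) 2, (∀ k, 0 ≤ x k) →
                ∀ k, ((S * T) x) k ≤ ((T * S) x) k) ∨
             (∀ x : lp (fun _ : ℕ => ℝ) 2, (∀ k, 0 ≤ x k) →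
                ∀ k, ((T * S) x) k ≤ ((S * T) x) k)) :
    (∃ 𝒞 : Set (Submodule ℝ (lp (fun _ : ℕ => ℝ) 2)),
      (∀ M ∈ 𝒞, IsClosed (M : Set (lp (fun _ : ℕ => ℝ) 2)) ∧
        ∀ x y : lp (fun _ : ℕ => ℝ) 2, (∀ k, |x k| ≤ |y k|) → y ∈ M → x ∈ M) ∧
      IsChain (· ≤ ·) 𝒞 ∧
      (∀ 𝒞' : Set (Submodule ℝ (lp (fun _ : ℕ => ℝ) 2)), 𝒞 ⊆ 𝒞' → IsChain (· ≤ ·) 𝒞' →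
        (∀ M ∈ 𝒞', IsClosed (M : Set (lp (fun _ : ℕ => ℝ) 2)) ∧
          ∀ x y : lp (fun _ : ℕ => ℝ) 2, (∀ k, |x k| ≤ |y k|) → y ∈ M → x ∈ M) → 𝒞' = 𝒞) ∧
      (∀ M ∈ 𝒞, (∀ x ∈ M, S x ∈ M) ∧ (∀ x ∈ M, T x ∈ M))) ∧
    (∀ n : ℕ, ∀ x ∈ Submodule.span ℝ
        ((fun k : ℕ => lp.single 2 k (1 : ℝ)) '' {k : ℕ | k ≤ n}),
      T x ∈ Submodule.span ℝ ((fun k : ℕ => lp.single 2 k (1 : ℝ)) '' {k : ℕ | k ≤ n})) := by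
  have hS_upper := isUpperTriangular_donoghue hS0 hSn
  have hT_upper := isUpperTriangular_of_semicommute hw hsum hS0 hSn hT hsemi
  refine ⟨⟨lowerBands, ?_, isChain_lowerBands, fun _ => eq_lowerBands_of_superset, ?_⟩, ?_⟩
  · rintro _ ⟨s, -, rfl⟩
    exact isClosedIdeal_band s
  · rintro _ ⟨s, hs, rfl⟩
    exact ⟨hS_upper.apply_mem_band hs, hT_upper.apply_mem_band hs⟩
  · intro n
    rw [Iic_def, span_eq_band_of_finite (finite_Iic n)]
    exact hT_upper.apply_mem_band (isLowerSet_Iic n)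

/-- If a positive bounded operator `T` on `ℓ²` semi-commutes with a Donoghue operator `S`
(given by `S e₀ = 0`, `S eₙ = wₙ eₙ₋₁` for positive, decreasing, square-summable weights),
then `S` and `T` are simultaneously ideal-triangularizable; in particular every subspace
`Mₙ = span{e₀, …, eₙ}` is invariant under `T`. -/
theorem donoghue_semicommuting_ideal_triangularizable
    (w : ℕ → ℝ) (hw : ∀ n : ℕ, 0 < w (n + 1))
    (hmono : ∀ n : ℕ, w (n + 2) ≤ w (n + 1))
    (hsum : Summable fun n : ℕ => w (n + 1) ^ 2)
    (S T : lp (fun _ : ℕ => ℝ) 2 →L[ℝ] lp (fun _ : ℕ => ℝ) 2)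
    (hS0 : S (lp.single 2 0 (1 : ℝ)) = 0)
    (hSn : ∀ n : ℕ, S (lp.single 2 (n + 1) (1 : ℝ)) = w (n + 1) • lp.single 2 n (1 : ℝ))
    (hT : ∀ x : lp (fun _ : ℕ => ℝ) 2, (∀ k, 0 ≤ x k) → ∀ k, 0 ≤ (T x) k)
    (hsemi : (∀ x : lp (fun _ : ℕ => ℝ) 2, (∀ k, 0 ≤ x k) →
                ∀ k, ((S * T) x) k ≤ ((T * S) x) k) ∨
             (∀ x : lp (fun _ : ℕ => ℝ) 2, (∀ k, 0 ≤ x k) →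
                ∀ k, ((T * S) x) k ≤ ((S * T) x) k)) :
    (∃ 𝒞 : Set (Submodule ℝ (lp (fun _ : ℕ => ℝ) 2)),
      (∀ M ∈ 𝒞, IsClosed (M : Set (lp (fun _ : ℕ => ℝ) 2)) ∧
        ∀ x y : lp (fun _ : ℕ => ℝ) 2, (∀ k, |x k| ≤ |y k|) → y ∈ M → x ∈ M) ∧
      IsChain (· ≤ ·) 𝒞 ∧
      (∀ 𝒞' : Set (Submodule ℝ (lp (fun _ : ℕ => ℝ) 2)), 𝒞 ⊆ 𝒞' → IsChain (· ≤ ·) 𝒞' →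
        (∀ M ∈ 𝒞', IsClosed (M : Set (lp (fun _ : ℕ => ℝ) 2)) ∧
          ∀ x y : lp (fun _ : ℕ => ℝ) 2, (∀ k, |x k| ≤ |y k|) → y ∈ M → x ∈ M) → 𝒞' = 𝒞) ∧
      (∀ M ∈ 𝒞, (∀ x ∈ M, S x ∈ M) ∧ (∀ x ∈ M, T x ∈ M))) ∧
    (∀ n : ℕ, ∀ x ∈ Submodule.span ℝ
        ((fun k : ℕ => lp.single 2 k (1 : ℝ)) '' {k : ℕ | k ≤ n}),
      T x ∈ Submodule.span ℝ ((fun k : ℕ => lp.single 2 k (1 : ℝ)) '' {k : ℕ | k ≤ n})) :=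
  donoghue_semicommuting_ideal_triangularizable_general w hw hsum S T hS0 hSn hT hsemi
end
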